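/- arXiv:1508.05963 — 3 statements merged into one kernel-verified Lean document; each statement's English description precedes it below -/
import Mathlib

section
/- Let τ be a permutation of length n ≥ 2. Then τ[1,n−1] = τ[2,n] if and only if τ is monotone. -/
open scoped Classical

noncomputable section

/-- A permutation of length `n`, written in one-line notation as `τ 0, τ 1, …, τ (n-1)`. -/
abbrev Perm' (n : ℕ) := Equiv.Perm (Fin n)

/-- `σ` occurs in `τ` as a consecutive pattern at (0-indexed) starting position `i`:
the window `τ i, …, τ (i+m-1)` of adjacent entries is in the same relative order as `σ`. -/
def OccursAt {m n : ℕ} (σ : Perm' m) (τ : Perm' n) (i : ℕ) : Prop :=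
  ∃ h : i + m ≤ n, ∀ a b : Fin m,
    σ a < σ b ↔
      τ ⟨i + a, by have := a.isLt; omega⟩ < τ ⟨i + b, by have := b.isLt; omega⟩

/-- Consecutive pattern containment `σ ≤ τ`. -/
def PattLE {m n : ℕ} (σ : Perm' m) (τ : Perm' n) : Prop :=
  ∃ i, OccursAt σ τ i

/-- Permutations of arbitrary length: the carrier of the consecutive pattern poset. -/
abbrev PermS : Type := Σ n : ℕ, Perm' n

/-- The order of the consecutive pattern poset. -/
def pLE (p q : PermS) : Prop := PattLE p.2 q.2

/-- The strict order of the consecutive pattern poset. -/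
def pLT (p q : PermS) : Prop := pLE p q ∧ p ≠ q

/-- The covering relation of the consecutive pattern poset. -/
def pCovBy (p q : PermS) : Prop :=
  pLT p q ∧ ∀ r : PermS, pLT p r → pLT r q → False

/-- The open interval `(p,q)` in the consecutive pattern poset. -/
def openInterval (p q : PermS) : Set PermS := {r | pLT p r ∧ pLT r q}

/-- The Hasse diagram of the open interval `(p,q)`: vertices are the permutations strictly
between `p` and `q`, edges are the covering relations of the consecutive pattern poset. -/
def hasse (p q : PermS) : SimpleGraph (openInterval p q) :=
  SimpleGraph.fromRel fun a b => pCovBy a.1 b.1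

/-- The interval `[p,q]` is disconnected if the Hasse diagram of `(p,q)` is not connected. -/
def IntervalDisconnected (p q : PermS) : Prop := ¬ (hasse p q).Connected

/-- `window τ i m` is the reduction of the window of `τ` of length `m` starting at
(0-indexed) position `i`, i.e. the pattern `τ[i+1, i+m]` in 1-indexed notation. -/
def window {n : ℕ} (τ : Perm' n) (i m : ℕ) : Perm' m :=
  if h : i + m ≤ n then
    (Tuple.sort fun a : Fin m => τ ⟨i + a, by have := a.isLt; omega⟩)⁻¹
  else 1

/-- `τ` is monotone, i.e. equal to `12…n` or `n…21`. -/
def IsMonotone {n : ℕ} (τ : Perm' n) : Prop :=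
  (∀ a b : Fin n, a ≤ b → τ a ≤ τ b) ∨ (∀ a b : Fin n, a ≤ b → τ b ≤ τ a)

/-- `τ` has a bifix (a common proper prefix and proper suffix) of length `k`. -/
def HasBifixLen {n : ℕ} (τ : Perm' n) (k : ℕ) : Prop :=
  0 < k ∧ k < n ∧ window τ 0 k = window τ (n - k) k

/-- The length `|x(τ)|` of the exterior of `τ`, the longest bifix of `τ`. -/
def extLen {n : ℕ} (τ : Perm' n) : ℕ := Nat.findGreatest (HasBifixLen τ) n

/-- The exterior `x(τ)` of `τ`: its longest bifix. -/
def extPerm {n : ℕ} (τ : Perm' n) : Perm' (extLen τ) := window τ 0 (extLen τ)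

/-- The interior `i(τ) = τ[2,n-1]` of `τ`. -/
def intPerm {n : ℕ} (τ : Perm' n) : Perm' (n - 2) := window τ 1 (n - 2)

/-- `p` straddles `q`: `p < q`, `p` is both a prefix and a suffix of `q`,
and `p` has no other occurrence in `q`. -/
def Straddles (p q : PermS) : Prop :=
  pLT p q ∧ OccursAt p.2 q.2 0 ∧ OccursAt p.2 q.2 (q.1 - p.1) ∧
    ∀ i, OccursAt p.2 q.2 i → i = 0 ∨ i = q.1 - p.1

/-- The interval `[p,q]` contains a non-trivial disconnected subinterval, i.e. a
subinterval `[a,b]` of rank at least 3 which is disconnected. -/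
def HasNontrivDisconSub (p q : PermS) : Prop :=
  ∃ a b : PermS, pLE p a ∧ pLE a b ∧ pLE b q ∧ a.1 + 3 ≤ b.1 ∧ IntervalDisconnected a b

/-- The finite set of all permutations of length at most `N`. -/
def permsUpTo (N : ℕ) : Finset PermS :=
  (Finset.range (N + 1)).sigma fun n => (Finset.univ : Finset (Perm' n))

/-- The closed interval `[p,q]` of the consecutive pattern poset, as a finite set. -/
def intervalF (p q : PermS) : Finset PermS :=
  (permsUpTo q.1).filter fun r => pLE p r ∧ pLE r q

/-- The number of elements of the interval `[σ,τ]` of rank `r`, i.e. of length `|σ| + r`. -/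
def rankCard {m n : ℕ} (σ : Perm' m) (τ : Perm' n) (r : ℕ) : ℕ :=
  ((permsUpTo n).filter fun p => pLE ⟨m, σ⟩ p ∧ pLE p ⟨n, τ⟩ ∧ p.1 = m + r).card

/-- The direct sum `σ ⊕ π` of two permutations. -/
def dsum {m k : ℕ} (σ : Perm' m) (π : Perm' k) : Perm' (m + k) :=
  finSumFinEquiv.permCongr (σ.sumCongr π)


/-!
If the two windows have the same reduction, then `τ i < τ j ↔ τ (i+1) < τ (j+1)` whenever both
sides make sense, because a reduction is determined by the order relations among its entries.
Taking `j = i + 1` shows that all adjacent pairs of `τ` compare the same way, so `τ` is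
increasing or decreasing; conversely a monotone `τ` compares every pair as its positions do.
-/

theorem Equiv.Perm.eq_of_lt_iff_lt {α : Type*} [LinearOrder α] [WellFoundedLT α]
    {σ π : Equiv.Perm α} (h : ∀ a b, σ a < σ b ↔ π a < π b) : σ = π := by
  let e : α ≃o α :=
    { toEquiv := σ⁻¹.trans π
      map_rel_iff' := fun {x y} => by
        simpa [not_lt] using (h (σ⁻¹ y) (σ⁻¹ x)).not.symm }
  ext a
  simpa [e] using (congrArg (· (σ a)) (Subsingleton.elim e (OrderIso.refl α))).symm

lemma window_lt_window_iff {n : ℕ} (τ : Perm' n) {i m : ℕ} (h : i + m ≤ n) (a b : Fin m) :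
    window τ i m a < window τ i m b ↔
      τ ⟨i + a, by have := a.isLt; omega⟩ < τ ⟨i + b, by have := b.isLt; omega⟩ := by
  set f : Fin m → Fin n := fun a : Fin m => τ ⟨i + a, by have := a.isLt; omega⟩
  have hf : Function.Injective f := fun x y hxy => by
    simpa [Fin.ext_iff] using τ.injective hxy
  have hsort : StrictMono (f ∘ Tuple.sort f) :=
    (Tuple.monotone_sort f).strictMono_of_injective (hf.comp (Tuple.sort f).injective)
  rw [window, dif_pos h, ← hsort.lt_iff_lt]
  simp [f]

lemma window_eq_window_iff {n : ℕ} (τ : Perm' n) {i j m : ℕ} (hi : i + m ≤ n)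
    (hj : j + m ≤ n) :
    window τ i m = window τ j m ↔ ∀ a b : Fin m,
      (τ ⟨i + a, by have := a.isLt; omega⟩ < τ ⟨i + b, by have := b.isLt; omega⟩ ↔
        τ ⟨j + a, by have := a.isLt; omega⟩ < τ ⟨j + b, by have := b.isLt; omega⟩) := by
  simp_rw [← window_lt_window_iff τ hi, ← window_lt_window_iff τ hj]
  exact ⟨fun h a b => by rw [h], Equiv.Perm.eq_of_lt_iff_lt⟩

theorem Fin.strictMono_or_strictAnti_iff_lt_iff_lt_succ {α : Type*} [LinearOrder α] {m : ℕ}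
    {f : Fin (m + 1) → α} (hf : Function.Injective f) :
    StrictMono f ∨ StrictAnti f ↔
      ∀ a b : Fin m, (f a.castSucc < f b.castSucc ↔ f a.succ < f b.succ) := by
  constructor
  · rintro (hmono | hanti) a b
    · simp [hmono.lt_iff_lt]
    · simp [hanti.lt_iff_gt]
  intro h
  let Rises (i : Fin m) : Prop := f i.castSucc < f i.succ
  have rises_iff_zero : ∀ k (hk : k < m), Rises ⟨k, hk⟩ ↔ Rises ⟨0, by omega⟩ := by
    intro k
    induction k with
    | zero => exact fun _ => Iff.rfl
    | succ k ih =>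
      intro hk
      rw [← ih (by omega)]
      -- `castSucc ⟨k + 1, _⟩` and `succ ⟨k, _⟩` are definitionally equal
      exact (h ⟨k, by omega⟩ ⟨k + 1, hk⟩).symm
  by_cases hall : ∀ i, Rises i
  · exact Or.inl (Fin.strictMono_iff_lt_succ.2 hall)
  · obtain ⟨⟨k, hk⟩, hfalls⟩ := not_forall.1 hall
    refine Or.inr (Fin.strictAnti_iff_succ_lt.2 fun ⟨j, hj⟩ => ?_)
    have hfalls' : ¬Rises ⟨j, hj⟩ := by rwa [rises_iff_zero, ← rises_iff_zero k hk]
    exact (not_lt.1 hfalls').lt_of_ne (hf.ne Fin.castSucc_lt_succ.ne')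

lemma isMonotone_iff_strictMono_or_strictAnti {n : ℕ} (τ : Perm' n) :
    IsMonotone τ ↔ StrictMono τ ∨ StrictAnti τ :=
  or_congr ⟨fun h => Monotone.strictMono_of_injective h τ.injective, fun h => h.monotone⟩
    ⟨fun h => Antitone.strictAnti_of_injective h τ.injective, fun h => h.antitone⟩

lemma window_zero_eq_window_one_iff {m : ℕ} (τ : Perm' (m + 1)) :
    window τ 0 m = window τ 1 m ↔
      ∀ a b : Fin m, (τ a.castSucc < τ b.castSucc ↔ τ a.succ < τ b.succ) := by
  rw [window_eq_window_iff τ (i := 0) (j := 1) (m := m) (by omega) (by omega)]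
  simp only [zero_add, add_comm 1]
  rfl

theorem stmt0_general {n : ℕ} (τ : Perm' n) :
    window τ 0 (n - 1) = window τ 1 (n - 1) ↔ IsMonotone τ := by
  cases n with
  | zero => exact ⟨fun _ => Or.inl fun a => a.elim0, fun _ => Equiv.ext fun a => a.elim0⟩
  | succ m =>
    rw [Nat.add_sub_cancel, window_zero_eq_window_one_iff, isMonotone_iff_strictMono_or_strictAnti,
      Fin.strictMono_or_strictAnti_iff_lt_iff_lt_succ τ.injective]

/-- Lemma 2.2: for a permutation `τ` of length `n ≥ 2`,
`τ[1,n-1] = τ[2,n]` if and only if `τ` is monotone. -/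
theorem stmt0 {n : ℕ} (hn : 2 ≤ n) (τ : Perm' n) :
    window τ 0 (n - 1) = window τ 1 (n - 1) ↔ IsMonotone τ :=
  stmt0_general τ

end
end

section
/- Let σ ≤ τ in the consecutive pattern poset 𝒫. The interval [σ,τ] = {π : σ ≤ π ≤ τ} is a chain (i.e., totally ordered by ≤) if and only if either τ is monotone, or σ has exactly one occurrence in τ and that occurrence is a prefix (starting position 1) or a suffix (starting position |τ|−|σ|+1) of τ. -/
open scoped Classical

noncomputable section

/-!
If `τ` is monotone, any two windows of `τ` of the same length have the same pattern, so two
elements of `[σ,τ]` compare by their lengths. If `σ` occurs in `τ` only once, as a prefix (a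
suffix), then every element of `[σ,τ]` occurs in `τ` only as a prefix (a suffix), and prefixes
(suffixes) of `τ` are totally ordered.

Conversely, in a chain two elements of the same length coincide. If `σ` occurs at position `k`,
the windows of length `|σ| + 1` starting at `k - 1` and at `k` contain `σ` at offsets `1` and `0`
respectively; being equal, each contains `σ` at both offsets, so `σ` also occurs at `k - 1` and
`k + 1`. An interior occurrence, or occurrences at both ends, thus spread to every position, and
for `|σ| ≥ 2` the overlapping occurrences force all adjacent pairs of `τ` to be compared the same
way. For `|σ| ≤ 1`, a non-monotone `τ` has an ascent and a descent next to each other, and the two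
windows of length `2` there are distinct elements of `[σ,τ]` of the same length.
-/

section

variable {m n k l : ℕ}

/-- `τ j` with a natural-number index `j`; out of range it is the junk value `0`. -/
def entry (τ : Perm' n) (j : ℕ) : ℕ := if h : j < n then τ ⟨j, h⟩ else 0

lemma entry_lt_entry_iff (τ : Perm' n) {x y : ℕ} (hx : x < n) (hy : y < n) :
    entry τ x < entry τ y ↔ τ ⟨x, hx⟩ < τ ⟨y, hy⟩ := by
  rw [entry, entry, dif_pos hx, dif_pos hy, Fin.lt_def]

lemma occursAt_iff {σ : Perm' m} {τ : Perm' n} {i : ℕ} :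
    OccursAt σ τ i ↔ i + m ≤ n ∧
      ∀ a < m, ∀ b < m, (entry σ a < entry σ b ↔ entry τ (i + a) < entry τ (i + b)) := by
  constructor
  · rintro ⟨h, hσ⟩
    refine ⟨h, fun a ha b hb => ?_⟩
    rw [entry_lt_entry_iff σ ha hb, entry_lt_entry_iff τ (by omega) (by omega)]
    exact hσ ⟨a, ha⟩ ⟨b, hb⟩
  · rintro ⟨h, hσ⟩
    refine ⟨h, fun a b => ?_⟩
    have := hσ a a.2 b b.2
    rwa [entry_lt_entry_iff σ a.2 b.2, entry_lt_entry_iff τ (by omega) (by omega)] at this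

lemma OccursAt.trans {σ : Perm' m} {π : Perm' k} {τ : Perm' n} {s u : ℕ}
    (hσ : OccursAt σ π s) (hπ : OccursAt π τ u) : OccursAt σ τ (u + s) := by
  rw [occursAt_iff] at *
  refine ⟨by omega, fun a ha b hb => ?_⟩
  rw [hσ.2 a ha b hb, hπ.2 (s + a) (by omega) (s + b) (by omega), add_assoc, add_assoc]

lemma OccursAt.occursAt_sub {π : Perm' k} {ρ : Perm' l} {τ : Perm' n} {p q : ℕ}
    (hπ : OccursAt π τ p) (hρ : OccursAt ρ τ q) (hqp : q ≤ p) (hpq : p + k ≤ q + l) :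
    OccursAt π ρ (p - q) := by
  rw [occursAt_iff] at *
  refine ⟨by omega, fun a ha b hb => ?_⟩
  rw [hπ.2 a ha b hb, hρ.2 (p - q + a) (by omega) (p - q + b) (by omega), ← add_assoc,
    ← add_assoc, Nat.add_sub_cancel' hqp]

lemma occursAt_window (τ : Perm' n) {i k : ℕ} (h : i + k ≤ n) :
    OccursAt (window τ i k) τ i := by
  set f : Fin k → Fin n := fun a => τ ⟨i + a, by have := a.isLt; omega⟩
  have hf : Function.Injective f := fun x y hxy =>
    Fin.ext (by have := congrArg Fin.val (τ.injective hxy); simpa using this)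
  have hsort : StrictMono (f ∘ Tuple.sort f) :=
    (Tuple.monotone_sort f).strictMono_of_injective (hf.comp (Tuple.sort f).injective)
  refine ⟨h, fun a b => ?_⟩
  rw [window, dif_pos h, ← hsort.lt_iff_lt]
  simp [f, Equiv.Perm.inv_def]

lemma occursAt_of_length_le_one (σ : Perm' m) (τ : Perm' n) {i : ℕ} (hm : m ≤ 1)
    (h : i + m ≤ n) : OccursAt σ τ i := by
  have := Fin.subsingleton_iff_le_one.mpr hm
  refine ⟨h, fun a b => ?_⟩
  obtain rfl := Subsingleton.elim a b
  exact iff_of_false (lt_irrefl _) (lt_irrefl _)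

lemma eq_of_pattLE {A B : Perm' k} (h : PattLE A B) : A = B := by
  obtain ⟨i, hi, hAB⟩ := h
  obtain rfl : i = 0 := by omega
  have hmono : StrictMono (A * B⁻¹) := fun x y hxy => by
    have := (hAB (B⁻¹ x) (B⁻¹ y)).mpr (by simpa using hxy)
    simpa using this
  ext x
  simpa using congrArg Fin.val (congrFun hmono.eq_id (B x))

lemma IsMonotone.entry_lt_entry_iff_or {τ : Perm' n} (hτ : IsMonotone τ) :
    (∀ x < n, ∀ y < n, entry τ x < entry τ y ↔ x < y) ∨
      (∀ x < n, ∀ y < n, entry τ x < entry τ y ↔ y < x) := by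
  refine hτ.imp (fun h x hx y hy => ?_) (fun h x hx y hy => ?_)
  · rw [entry_lt_entry_iff τ hx hy,
      StrictMono.lt_iff_lt (Monotone.strictMono_of_injective h τ.injective), Fin.mk_lt_mk]
  · rw [entry_lt_entry_iff τ hx hy,
      StrictAnti.lt_iff_gt (Antitone.strictAnti_of_injective h τ.injective), Fin.mk_lt_mk]

lemma IsMonotone.occursAt {π : Perm' k} {τ : Perm' n} {u v : ℕ} (hτ : IsMonotone τ)
    (hπ : OccursAt π τ u) (hv : v + k ≤ n) : OccursAt π τ v := by
  rw [occursAt_iff] at *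
  refine ⟨hv, fun a ha b hb => ?_⟩
  rw [hπ.2 a ha b hb]
  rcases hτ.entry_lt_entry_iff_or with h | h <;>
    rw [h _ (by omega) _ (by omega), h _ (by omega) _ (by omega)] <;> omega

def AscentAt (τ : Perm' n) (j : ℕ) : Prop := entry τ j < entry τ (j + 1)

lemma OccursAt.ascentAt_iff {σ : Perm' m} {τ : Perm' n} {i c : ℕ} (h : OccursAt σ τ i)
    (hc : c + 1 < m) : AscentAt τ (i + c) ↔ AscentAt σ c := by
  rw [occursAt_iff] at h
  rw [AscentAt, AscentAt, h.2 c (by omega) (c + 1) hc, add_assoc]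

lemma isMonotone_of_ascentAt_iff {τ : Perm' n}
    (h : ∀ j, j + 2 < n → (AscentAt τ j ↔ AscentAt τ (j + 1))) : IsMonotone τ := by
  have hconst : ∀ j, j + 1 < n → (AscentAt τ j ↔ AscentAt τ 0) := by
    intro j
    induction j with
    | zero => exact fun _ => Iff.rfl
    | succ j ih => exact fun hj => (h j (by omega)).symm.trans (ih (by omega))
  cases n with
  | zero => exact Or.inl fun a => a.elim0
  | succ n =>
    by_cases h₀ : AscentAt τ 0
    · refine Or.inl (Fin.strictMono_iff_lt_succ.mpr fun i => ?_).monotone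
      have := (hconst i (by omega)).mpr h₀
      rwa [AscentAt, entry_lt_entry_iff τ (by omega) (by omega)] at this
    · refine Or.inr (Fin.strictAnti_iff_succ_lt.mpr fun i => ?_).antitone
      have := mt (hconst i (by omega)).mp h₀
      rw [AscentAt, entry_lt_entry_iff τ (by omega) (by omega), not_lt] at this
      exact this.lt_of_ne (τ.injective.ne (Fin.castSucc_lt_succ (i := i)).ne')

lemma OccursAt.ascentAt_iff_ascentAt_succ {σ : Perm' m} {τ : Perm' n} {i c : ℕ}
    (h₀ : OccursAt σ τ i) (h₁ : OccursAt σ τ (i + 1)) (hc : c + 1 < m) :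
    AscentAt τ (i + c) ↔ AscentAt τ (i + c + 1) := by
  rw [h₀.ascentAt_iff hc, show i + c + 1 = i + 1 + c by omega, h₁.ascentAt_iff hc]

lemma isMonotone_of_forall_occursAt {σ : Perm' m} {τ : Perm' n} (hm : 2 ≤ m) (hmn : m < n)
    (h : ∀ i, i + m ≤ n → OccursAt σ τ i) : IsMonotone τ :=
  isMonotone_of_ascentAt_iff fun j hj => by
    -- the pairs `(j, j + 1)` and `(j + 1, j + 2)` lie in the occurrences at `i` and `i + 1`
    obtain ⟨i, hi⟩ : ∃ i, i = min j (n - m - 1) := ⟨_, rfl⟩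
    have := (h i (by omega)).ascentAt_iff_ascentAt_succ (h (i + 1) (by omega)) (c := j - i)
      (by omega)
    rwa [show i + (j - i) = j by omega] at this

theorem Nat.forall_le_of_step {P : ℕ → Prop} {N k : ℕ} (hk : P k) (hk₀ : 0 < k) (hkN : k < N)
    (step : ∀ j, 0 < j → j < N → P j → P (j - 1) ∧ P (j + 1)) : ∀ j ≤ N, P j := by
  intro j hj
  rcases le_total k j with hkj | hjk
  · induction j, hkj using Nat.le_induction with
    | base => exact hk
    | succ j hkj ih => exact (step j (by omega) (by omega) (ih (by omega))).2
  · induction hjk using Nat.decreasingInduction with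
    | self => exact hk
    | of_succ j hj ih => simpa using (step (j + 1) (by omega) (by omega) (ih (by omega))).1

def IsChainIcc (p q : PermS) : Prop :=
  ∀ a b : PermS, pLE p a → pLE a q → pLE p b → pLE b q → pLE a b ∨ pLE b a

lemma isChainIcc_of_length_le {p q : PermS}
    (h : ∀ k (π : Perm' k) l (ρ : Perm' l), pLE p ⟨k, π⟩ → pLE ⟨k, π⟩ q → pLE p ⟨l, ρ⟩ →
      pLE ⟨l, ρ⟩ q → k ≤ l → PattLE π ρ) :
    IsChainIcc p q := fun ⟨k, π⟩ ⟨l, ρ⟩ hπ hπ' hρ hρ' =>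
  (le_total k l).imp (h k π l ρ hπ hπ' hρ hρ') (h l ρ k π hρ hρ' hπ hπ')

lemma IsMonotone.isChainIcc {τ : Perm' n} (hτ : IsMonotone τ) (p : PermS) :
    IsChainIcc p ⟨n, τ⟩ :=
  isChainIcc_of_length_le fun k π l ρ _ hπ _ hρ (hkl : k ≤ l) => by
    obtain ⟨u, hu⟩ : PattLE π τ := hπ
    obtain ⟨v, hv⟩ : PattLE ρ τ := hρ
    have := hv.1
    exact ⟨0, by simpa using (hτ.occursAt hu (by omega)).occursAt_sub hv le_rfl (by omega)⟩

section Interval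

variable {σ : Perm' m} {τ : Perm' n}

lemma isChainIcc_of_forall_occursAt_eq_zero (h : ∀ i, OccursAt σ τ i → i = 0) :
    IsChainIcc ⟨m, σ⟩ ⟨n, τ⟩ := by
  have hprefix {k : ℕ} {π : Perm' k} {u : ℕ} (hσ : PattLE σ π) (hπ : OccursAt π τ u) :
      u = 0 := by
    obtain ⟨s, hs⟩ := hσ
    have := h _ (hs.trans hπ)
    omega
  refine isChainIcc_of_length_le fun k π l ρ hσπ hπ hσρ hρ (hkl : k ≤ l) => ?_
  obtain ⟨u, hπ⟩ : PattLE π τ := hπ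
  obtain ⟨v, hρ⟩ : PattLE ρ τ := hρ
  obtain rfl := hprefix (π := π) hσπ hπ
  obtain rfl := hprefix (π := ρ) hσρ hρ
  exact ⟨0, hπ.occursAt_sub hρ le_rfl (by omega)⟩

lemma isChainIcc_of_forall_occursAt_eq_sub (h : ∀ i, OccursAt σ τ i → i = n - m) :
    IsChainIcc ⟨m, σ⟩ ⟨n, τ⟩ := by
  have hsuffix {k : ℕ} {π : Perm' k} {u : ℕ} (hσ : PattLE σ π) (hπ : OccursAt π τ u) :
      u + k = n := by
    obtain ⟨s, hs⟩ := hσ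
    have := h _ (hs.trans hπ)
    have := hs.1
    have := hπ.1
    omega
  refine isChainIcc_of_length_le fun k π l ρ hσπ hπ hσρ hρ (hkl : k ≤ l) => ?_
  obtain ⟨u, hπ⟩ : PattLE π τ := hπ
  obtain ⟨v, hρ⟩ : PattLE ρ τ := hρ
  have := hsuffix (π := π) hσπ hπ
  have := hsuffix (π := ρ) hσρ hρ
  exact ⟨u - v, hπ.occursAt_sub hρ (by omega) (by omega)⟩

variable (hch : IsChainIcc ⟨m, σ⟩ ⟨n, τ⟩)
include hch

lemma IsChainIcc.eq_of_length_eq {A B : Perm' k} (hA : PattLE σ A) (hA' : PattLE A τ)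
    (hB : PattLE σ B) (hB' : PattLE B τ) : A = B :=
  (hch ⟨k, A⟩ ⟨k, B⟩ hA hA' hB hB').elim eq_of_pattLE fun h => (eq_of_pattLE h).symm

lemma IsChainIcc.occursAt_succ_and_occursAt {a b : ℕ} (ha : OccursAt σ τ a)
    (hb : OccursAt σ τ (b + 1)) (han : a + m < n) :
    OccursAt σ τ (a + 1) ∧ OccursAt σ τ b := by
  have hWa := occursAt_window τ (i := a) (k := m + 1) (by omega)
  have hWb := occursAt_window τ (i := b) (k := m + 1) (by have := hb.1; omega)
  have hσa : OccursAt σ (window τ a (m + 1)) 0 := by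
    simpa using ha.occursAt_sub hWa le_rfl (by omega)
  have hσb : OccursAt σ (window τ b (m + 1)) 1 := by
    simpa using hb.occursAt_sub hWb (by omega) (by have := hb.1; omega)
  have hW := hch.eq_of_length_eq ⟨0, hσa⟩ ⟨a, hWa⟩ ⟨1, hσb⟩ ⟨b, hWb⟩
  rw [hW] at hWa hσa
  exact ⟨hσb.trans hWa, hσa.trans hWb⟩

lemma IsChainIcc.forall_occursAt {k : ℕ} (hk : OccursAt σ τ k) (hk₀ : 0 < k) (hkn : k + m < n) :
    ∀ j, j + m ≤ n → OccursAt σ τ j := by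
  have := Nat.forall_le_of_step (P := OccursAt σ τ) (N := n - m) hk hk₀ (by omega)
    fun j hj₀ hjn hj =>
      (hch.occursAt_succ_and_occursAt hj (by rwa [Nat.sub_add_cancel hj₀]) (by omega)).symm
  exact fun j hj => this j (by omega)

lemma IsChainIcc.isMonotone_of_occursAt (hm : 2 ≤ m) {k : ℕ} (hk : OccursAt σ τ k)
    (hk₀ : 0 < k) (hkn : k + m < n) : IsMonotone τ :=
  isMonotone_of_forall_occursAt hm (by omega) (hch.forall_occursAt hk hk₀ hkn)

lemma IsChainIcc.isMonotone_of_occursAt_zero_of_occursAt_sub (hm : 2 ≤ m) (hmn : m < n)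
    (h₀ : OccursAt σ τ 0) (h₁ : OccursAt σ τ (n - m)) : IsMonotone τ := by
  have hone := (hch.occursAt_succ_and_occursAt h₀ (b := n - m - 1)
    (by rwa [Nat.sub_add_cancel (by omega)]) (by omega)).1
  rcases Nat.lt_or_ge 1 (n - m) with h | h
  · exact hch.isMonotone_of_occursAt hm hone one_pos (by omega)
  · refine isMonotone_of_forall_occursAt (σ := σ) hm hmn fun i hi => ?_
    obtain rfl | rfl : i = 0 ∨ i = 1 := by omega
    exacts [h₀, hone]

lemma IsChainIcc.isMonotone_of_length_le_one (hm : m ≤ 1) : IsMonotone τ := by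
  by_contra hτ
  obtain ⟨j, hj, hasc⟩ : ∃ j, j + 2 < n ∧ ¬(AscentAt τ j ↔ AscentAt τ (j + 1)) := by
    by_contra! h
    exact hτ (isMonotone_of_ascentAt_iff h)
  have hW₀ := occursAt_window τ (i := j) (k := 2) (by omega)
  have hW₁ := occursAt_window τ (i := j + 1) (k := 2) (by omega)
  have hW := hch.eq_of_length_eq ⟨0, occursAt_of_length_le_one σ _ hm (by omega)⟩ ⟨j, hW₀⟩
    ⟨0, occursAt_of_length_le_one σ _ hm (by omega)⟩ ⟨j + 1, hW₁⟩
  rw [hW] at hW₀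
  exact hasc ((hW₀.ascentAt_iff (c := 0) one_lt_two).trans (hW₁.ascentAt_iff one_lt_two).symm)

end Interval

end

theorem stmt1_general {m n : ℕ} (σ : Perm' m) (τ : Perm' n) (hle : PattLE σ τ) :
    (∀ p q : PermS, pLE ⟨m, σ⟩ p → pLE p ⟨n, τ⟩ → pLE ⟨m, σ⟩ q → pLE q ⟨n, τ⟩ →
        pLE p q ∨ pLE q p) ↔
      (IsMonotone τ ∨
        ((∀ i j, OccursAt σ τ i → OccursAt σ τ j → i = j) ∧
          ∀ i, OccursAt σ τ i → i = 0 ∨ i = n - m)) := by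
  constructor
  · intro (hch : IsChainIcc ⟨m, σ⟩ ⟨n, τ⟩)
    by_cases hτ : IsMonotone τ
    · exact Or.inl hτ
    have hm : 2 ≤ m := by
      by_contra! hm
      exact hτ (hch.isMonotone_of_length_le_one (by omega))
    have hbd : ∀ i, OccursAt σ τ i → i = 0 ∨ i = n - m := fun i hi => by
      by_contra! h
      exact hτ (hch.isMonotone_of_occursAt hm hi (by omega) (by have := hi.1; omega))
    refine Or.inr ⟨fun i j hi hj => ?_, hbd⟩
    by_contra hij
    have hmn : m < n := by have := hi.1; have := hj.1; omega
    rcases hbd i hi with rfl | rfl <;> rcases hbd j hj with rfl | rfl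
    · exact hij rfl
    · exact hτ (hch.isMonotone_of_occursAt_zero_of_occursAt_sub hm hmn hi hj)
    · exact hτ (hch.isMonotone_of_occursAt_zero_of_occursAt_sub hm hmn hj hi)
    · exact hij rfl
  · rintro (hτ | ⟨huniq, hbd⟩)
    · exact hτ.isChainIcc _
    · obtain ⟨t, ht⟩ := hle
      rcases hbd t ht with rfl | rfl
      · exact isChainIcc_of_forall_occursAt_eq_zero fun i hi => huniq i 0 hi ht
      · exact isChainIcc_of_forall_occursAt_eq_sub fun i hi => huniq i _ hi ht

/-- Proposition 2.3: the interval `[σ,τ]` is a chain iff `τ` is monotone,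
or `σ` occurs exactly once in `τ` and does so as a prefix or a suffix. -/
theorem stmt1 {m n : ℕ} (hm : 1 ≤ m) (σ : Perm' m) (τ : Perm' n) (hle : PattLE σ τ) :
    (∀ p q : PermS, pLE ⟨m, σ⟩ p → pLE p ⟨n, τ⟩ → pLE ⟨m, σ⟩ q → pLE q ⟨n, τ⟩ →
        pLE p q ∨ pLE q p) ↔
      (IsMonotone τ ∨
        ((∀ i j, OccursAt σ τ i → OccursAt σ τ j → i = j) ∧
          ∀ i, OccursAt σ τ i → i = 0 ∨ i = n - m)) :=
  stmt1_general σ τ hle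

end
end

section
/- Let σ ≤ τ in the consecutive pattern poset 𝒫 with |τ| = n, and suppose σ has exactly one occurrence in τ, namely σ = τ[i,j]. Then the interval [σ,τ] is order-isomorphic to the product of two chains having i and n−j+1 elements respectively (i.e., to Fin i × Fin (n−j+1) with the product order). -/
open scoped Classical

noncomputable section

lemma perm_fin_congr {n : ℕ} (τ : Perm' n) {i j : ℕ} (hi : i < n) (hj : j < n) (h : i = j) :
    τ ⟨i, hi⟩ = τ ⟨j, hj⟩ := by subst h; rfl

lemma window_spec {n : ℕ} (τ : Perm' n) (a len : ℕ) (h : a + len ≤ n) (x y : Fin len) :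
    window τ a len x < window τ a len y ↔
      τ ⟨a + x, by have := x.isLt; omega⟩ < τ ⟨a + y, by have := y.isLt; omega⟩ := by
  unfold window
  rw [dif_pos h]
  set f : Fin len → Fin n := fun z : Fin len => τ ⟨a + z, by have := z.isLt; omega⟩ with hf
  have hfinj : Function.Injective f := by
    intro u v huv
    have := τ.injective huv
    have := Fin.mk.injEq .. ▸ this
    exact Fin.ext (by omega)
  have hsm : StrictMono (f ∘ Tuple.sort f) :=
    (Tuple.monotone_sort f).strictMono_of_injective (hfinj.comp (Tuple.sort f).injective)
  have key : ∀ u v : Fin len, (Tuple.sort f)⁻¹ u < (Tuple.sort f)⁻¹ v ↔ f u < f v := by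
    intro u v
    rw [← hsm.lt_iff_lt]
    simp [Function.comp]
  exact key x y

lemma occursAt_window_self {n : ℕ} (τ : Perm' n) (a len : ℕ) (h : a + len ≤ n) :
    OccursAt (window τ a len) τ a :=
  ⟨h, fun x y => window_spec τ a len h x y⟩

lemma occursAt_eq_window {l n : ℕ} {ρ : Perm' l} {τ : Perm' n} {a : ℕ}
    (h : OccursAt ρ τ a) : ρ = window τ a l := by
  obtain ⟨hle, H⟩ := h
  set w := window τ a l with hw
  have hiff : ∀ x y : Fin l, ρ x < ρ y ↔ w x < w y := by
    intro x y
    rw [H x y, window_spec τ a l hle x y]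
  -- the permutation ρ ∘ w⁻¹ is strictly monotone, hence the identity
  have hsm : StrictMono (fun u => ρ (w⁻¹ u)) := by
    intro u v huv
    show ρ (w⁻¹ u) < ρ (w⁻¹ v)
    rw [hiff]
    simpa using huv
  have hsurj : Function.Surjective (fun u => ρ (w⁻¹ u)) :=
    ((w⁻¹ : Perm' l).trans ρ).surjective
  have hcoe := StrictMono.coe_orderIsoOfSurjective _ hsm hsurj
  have huniq2 : StrictMono.orderIsoOfSurjective _ hsm hsurj = OrderIso.refl (Fin l) :=
    Subsingleton.elim _ _
  have hid : (fun u => ρ (w⁻¹ u)) = id := by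
    rw [← hcoe, huniq2]; rfl
  ext x
  have hx : ρ x = w x := by
    have := congrFun hid (w x)
    simpa using this
  exact congrArg Fin.val hx

lemma occursAt_trans {l k n : ℕ} {ρ : Perm' l} {π : Perm' k} {τ : Perm' n} {j i : ℕ}
    (h1 : OccursAt ρ π j) (h2 : OccursAt π τ i) : OccursAt ρ τ (i + j) := by
  obtain ⟨hj, H1⟩ := h1
  obtain ⟨hi, H2⟩ := h2
  refine ⟨by omega, fun a b => ?_⟩
  rw [H1 a b, H2 ⟨j + a, by have := a.isLt; omega⟩ ⟨j + b, by have := b.isLt; omega⟩]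
  constructor
  · intro h
    calc τ ⟨i + j + ↑a, _⟩ = τ ⟨i + ↑(⟨j + ↑a, _⟩ : Fin k), _⟩ :=
          perm_fin_congr τ _ _ (by simp; omega)
      _ < τ ⟨i + ↑(⟨j + ↑b, _⟩ : Fin k), _⟩ := h
      _ = τ ⟨i + j + ↑b, _⟩ := perm_fin_congr τ _ _ (by simp; omega)
  · intro h
    calc τ ⟨i + ↑(⟨j + ↑a, _⟩ : Fin k), _⟩ = τ ⟨i + j + ↑a, _⟩ :=
          perm_fin_congr τ _ _ (by simp; omega)
      _ < τ ⟨i + j + ↑b, _⟩ := h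
      _ = τ ⟨i + ↑(⟨j + ↑b, _⟩ : Fin k), _⟩ := perm_fin_congr τ _ _ (by simp; omega)

lemma occursAt_window_of_sub {n : ℕ} (τ : Perm' n) {a len a' len' : ℕ}
    (h' : a' + len' ≤ n) (h1 : a' ≤ a) (h2 : a + len ≤ a' + len') :
    OccursAt (window τ a len) (window τ a' len') (a - a') := by
  refine ⟨by omega, fun x y => ?_⟩
  rw [window_spec τ a len (by omega) x y,
      window_spec τ a' len' h' ⟨a - a' + x, by have := x.isLt; omega⟩
        ⟨a - a' + y, by have := y.isLt; omega⟩]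
  constructor
  · intro h
    calc τ ⟨a' + ↑(⟨a - a' + ↑x, _⟩ : Fin len'), _⟩ = τ ⟨a + ↑x, _⟩ :=
          perm_fin_congr τ _ _ (by simp; omega)
      _ < τ ⟨a + ↑y, _⟩ := h
      _ = τ ⟨a' + ↑(⟨a - a' + ↑y, _⟩ : Fin len'), _⟩ := perm_fin_congr τ _ _ (by simp; omega)
  · intro h
    calc τ ⟨a + ↑x, _⟩ = τ ⟨a' + ↑(⟨a - a' + ↑x, _⟩ : Fin len'), _⟩ :=
          perm_fin_congr τ _ _ (by simp; omega)
      _ < τ ⟨a' + ↑(⟨a - a' + ↑y, _⟩ : Fin len'), _⟩ := h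
      _ = τ ⟨a + ↑y, _⟩ := perm_fin_congr τ _ _ (by simp; omega)

/-- Proposition 2.4: if `σ` occurs exactly once in `τ`, at 0-indexed
position `p` (so as `τ[p+1, p+m]` in 1-indexed notation, i.e. `i = p+1`, `j = p+m`), then
`[σ,τ]` is order-isomorphic to the product of two chains with `p+1 = i` and
`n-(p+m)+1 = n-j+1` elements. -/
theorem stmt2 {m n : ℕ} (hm : 1 ≤ m) (σ : Perm' m) (τ : Perm' n) (p : ℕ)
    (hocc : OccursAt σ τ p) (huniq : ∀ i, OccursAt σ τ i → i = p) :
    ∃ e : {r : PermS // pLE ⟨m, σ⟩ r ∧ pLE r ⟨n, τ⟩} ≃ Fin (p + 1) × Fin (n - (p + m) + 1),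
      ∀ x y, pLE x.1 y.1 ↔ e x ≤ e y := by
  have hpn : p + m ≤ n := hocc.1
  have exu : ∀ r : {r : PermS // pLE ⟨m, σ⟩ r ∧ pLE r ⟨n, τ⟩},
      ∃ i, OccursAt r.1.2 τ i ∧ i ≤ p ∧ p + m ≤ i + r.1.1 ∧ i + r.1.1 ≤ n ∧
        (∀ j, OccursAt r.1.2 τ j → j = i) := by
    rintro ⟨⟨l, ρ⟩, ⟨k, hk⟩, ⟨i, hi⟩⟩
    have hkm : k + m ≤ l := hk.1
    have hik : i + l ≤ n := hi.1
    have h2 : i + k = p := huniq _ (occursAt_trans hk hi)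
    refine ⟨i, hi, by omega, show p + m ≤ i + l by omega, show i + l ≤ n by omega, ?_⟩
    intro j hj
    have := huniq _ (occursAt_trans hk hj)
    omega
  choose pos hOcc hle1 hle2 hle3 hUniq using exu
  set f : {r : PermS // pLE ⟨m, σ⟩ r ∧ pLE r ⟨n, τ⟩} → Fin (p + 1) × Fin (n - (p + m) + 1) :=
    fun r => (⟨p - pos r, Nat.lt_succ_of_le (Nat.sub_le _ _)⟩,
              ⟨pos r + r.1.1 - (p + m), by have := hle3 r; omega⟩) with hfdef
  have hinj : Function.Injective f := by
    rintro ⟨⟨l, ρ⟩, hr⟩ ⟨⟨l', ρ'⟩, hr'⟩ h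
    set r : {r : PermS // pLE ⟨m, σ⟩ r ∧ pLE r ⟨n, τ⟩} := ⟨⟨l, ρ⟩, hr⟩ with hrdef
    set r' : {r : PermS // pLE ⟨m, σ⟩ r ∧ pLE r ⟨n, τ⟩} := ⟨⟨l', ρ'⟩, hr'⟩ with hrdef'
    have h1 : p - pos r = p - pos r' :=
      congrArg (fun z : Fin (p + 1) × Fin (n - (p + m) + 1) => z.1.1) h
    have h2 : pos r + l - (p + m) = pos r' + l' - (p + m) :=
      congrArg (fun z : Fin (p + 1) × Fin (n - (p + m) + 1) => z.2.1) h
    have hB1 : p + m ≤ pos r + l := hle2 r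
    have hB2 : p + m ≤ pos r' + l' := hle2 r'
    have hC1 : pos r ≤ p := hle1 r
    have hC2 : pos r' ≤ p := hle1 r'
    have hp1 : pos r = pos r' := by omega
    have hl : l = l' := by omega
    subst hl
    have e1 : ρ = window τ (pos r) l := occursAt_eq_window (hOcc r)
    have e2 : ρ' = window τ (pos r') l := occursAt_eq_window (hOcc r')
    have : ρ = ρ' := by rw [e1, e2, hp1]
    subst this
    rfl
  have hsurj : Function.Surjective f := by
    rintro ⟨L, R⟩
    have hL : L.1 ≤ p := by have := L.isLt; omega
    have hR : R.1 ≤ n - (p + m) := by have := R.isLt; omega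
    have hwn : (p - L.1) + (m + L.1 + R.1) ≤ n := by omega
    have hσw : σ = window τ p m := occursAt_eq_window hocc
    have hmem1 : pLE ⟨m, σ⟩ ⟨m + L.1 + R.1, window τ (p - L.1) (m + L.1 + R.1)⟩ := by
      refine ⟨p - (p - L.1), ?_⟩
      show OccursAt σ (window τ (p - L.1) (m + L.1 + R.1)) _
      rw [hσw]
      exact occursAt_window_of_sub τ hwn (by omega) (by omega)
    have hmem2 : pLE ⟨m + L.1 + R.1, window τ (p - L.1) (m + L.1 + R.1)⟩ ⟨n, τ⟩ :=
      ⟨p - L.1, occursAt_window_self τ _ _ hwn⟩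
    refine ⟨⟨⟨m + L.1 + R.1, window τ (p - L.1) (m + L.1 + R.1)⟩, hmem1, hmem2⟩, ?_⟩
    set r : {r : PermS // pLE ⟨m, σ⟩ r ∧ pLE r ⟨n, τ⟩} :=
      ⟨⟨m + L.1 + R.1, window τ (p - L.1) (m + L.1 + R.1)⟩, hmem1, hmem2⟩ with hrdef
    have hp : pos r = p - L.1 := (hUniq r (p - L.1) (occursAt_window_self τ _ _ hwn)).symm
    show (⟨_, _⟩, ⟨_, _⟩) = (L, R)
    have : r.1.1 = m + L.1 + R.1 := rfl
    refine Prod.ext (Fin.ext ?_) (Fin.ext ?_) <;> simp only [hp, this] <;> omega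
  refine ⟨Equiv.ofBijective f ⟨hinj, hsurj⟩, ?_⟩
  intro x y
  simp only [Equiv.ofBijective_apply, hfdef, Prod.mk_le_mk, Fin.mk_le_mk]
  constructor
  · rintro ⟨j, hj⟩
    have h2 : pos y + j = pos x := hUniq x _ (occursAt_trans hj (hOcc y))
    have hjb : j + x.1.1 ≤ y.1.1 := hj.1
    have := hle1 x; have := hle1 y; have := hle2 x; have := hle2 y
    exact ⟨by omega, by omega⟩
  · rintro ⟨h1, h2⟩
    have hx1 := hle1 x; have hy1 := hle1 y
    have hx2 := hle2 x; have hy2 := hle2 y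
    have hxy1 : pos y ≤ pos x := by omega
    have hxy2 : pos x + x.1.1 ≤ pos y + y.1.1 := by omega
    refine ⟨pos x - pos y, ?_⟩
    have ex : x.1.2 = window τ (pos x) x.1.1 := occursAt_eq_window (hOcc x)
    have ey : y.1.2 = window τ (pos y) y.1.1 := occursAt_eq_window (hOcc y)
    show OccursAt x.1.2 y.1.2 (pos x - pos y)
    rw [ex, ey]
    exact occursAt_window_of_sub τ (hle3 y) hxy1 hxy2

end
end
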